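/- Let k ≥ 2 and let Γ be an outer straight-line apRAC drawing of the linked-K_{2,3} graph L_k. Then for each index i, every edge of L_k that does not belong to the subgraph G_i and crosses some edge of G_i is one of the two link edges incident to G_i, namely t_i s_{i+1} or t_{i−1} s_i (indices modulo k). -/

import Mathlib

open scoped RealInnerProductSpace

noncomputable section

/-- The Euclidean plane. -/
abbrev Plane : Type := EuclideanSpace ℝ (Fin 2)

/-- A straight-line drawing of a simple graph `G`: an injective placement of the vertices in
the plane such that no vertex lies in the relative interior of an edge segment, any two
distinct edge segments meet in at most one point, and segments of edges sharing an endpoint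
meet only at the image of that common endpoint. -/
structure StraightLineDrawing {V : Type*} (G : SimpleGraph V) where
  ρ : V → Plane
  inj : Function.Injective ρ
  vertex_not_interior : ∀ ⦃u v : V⦄, G.Adj u v → ∀ w : V,
    ρ w ∉ openSegment ℝ (ρ u) (ρ v)
  one_point : ∀ ⦃u v a b : V⦄, G.Adj u v → G.Adj a b → s(u, v) ≠ s(a, b) →
    (segment ℝ (ρ u) (ρ v) ∩ segment ℝ (ρ a) (ρ b)).Subsingleton
  shared_endpoint : ∀ ⦃u v w : V⦄, G.Adj u v → G.Adj u w → v ≠ w →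
    segment ℝ (ρ u) (ρ v) ∩ segment ℝ (ρ u) (ρ w) = {ρ u}

namespace StraightLineDrawing

variable {V : Type*} {G : SimpleGraph V} (D : StraightLineDrawing G)

/-- The edges `uv` and `ab` cross: their segments meet at a point lying in the relative
interior of both segments. -/
def Crosses (u v a b : V) : Prop :=
  ∃ p : Plane, p ∈ openSegment ℝ (D.ρ u) (D.ρ v) ∧ p ∈ openSegment ℝ (D.ρ a) (D.ρ b)

/-- The union of all edge segments of the drawing. -/
def drawingSet : Set Plane :=
  ⋃ (u : V) (v : V) (_ : G.Adj u v), segment ℝ (D.ρ u) (D.ρ v)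

/-- The outer cell: the union of the unbounded connected components of the complement of the
drawing. -/
def OuterCell : Set Plane :=
  {p | p ∉ D.drawingSet ∧ ¬ Bornology.IsBounded (connectedComponentIn D.drawingSetᶜ p)}

/-- A drawing is outer if every vertex lies in the closure of the outer cell. -/
def IsOuter : Prop := ∀ w : V, D.ρ w ∈ closure D.OuterCell

/-- A drawing is RAC if any two crossing edges are drawn on perpendicular lines. -/
def IsRAC : Prop :=
  ∀ ⦃u v a b : V⦄, G.Adj u v → G.Adj a b → D.Crosses u v a b →
    (inner ℝ (D.ρ v - D.ρ u) (D.ρ b - D.ρ a) : ℝ) = 0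

/-- The segment from `p` to `q` has slope `1` or `-1`. -/
def HasSlopePM1 (p q : Plane) : Prop :=
  q 1 - p 1 = q 0 - p 0 ∨ q 1 - p 1 = -(q 0 - p 0)

/-- A drawing is apRAC if it is RAC and every edge involved in a crossing has slope `±1`. -/
def IsApRAC : Prop :=
  D.IsRAC ∧ ∀ ⦃u v : V⦄, G.Adj u v →
    (∃ a b : V, G.Adj a b ∧ D.Crosses u v a b) → HasSlopePM1 (D.ρ u) (D.ρ v)

end StraightLineDrawing

/-- A graph is outer-RAC if it admits an outer straight-line RAC drawing. -/
def IsOuterRAC {V : Type*} (G : SimpleGraph V) : Prop :=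
  ∃ D : StraightLineDrawing G, D.IsOuter ∧ D.IsRAC

/-- A graph is outer-apRAC if it admits an outer straight-line apRAC drawing. -/
def IsOuterApRAC {V : Type*} (G : SimpleGraph V) : Prop :=
  ∃ D : StraightLineDrawing G, D.IsOuter ∧ D.IsApRAC

end


noncomputable section
namespace LKAux

def toC (v : Plane) : ℂ := ⟨v 0, v 1⟩

@[simp] lemma toC_re (v : Plane) : (toC v).re = v 0 := rfl
@[simp] lemma toC_im (v : Plane) : (toC v).im = v 1 := rfl

lemma toC_inj : Function.Injective toC := by
  intro u v h
  have h0 : u 0 = v 0 := congrArg Complex.re h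
  have h1 : u 1 = v 1 := congrArg Complex.im h
  ext i
  fin_cases i <;> assumption

lemma continuous_toC : Continuous toC := by
  have h0 : Continuous fun v : Plane => v 0 := (continuous_apply 0).comp (PiLp.continuous_ofLp 2 _)
  have h1 : Continuous fun v : Plane => v 1 := (continuous_apply 1).comp (PiLp.continuous_ofLp 2 _)
  have : Continuous fun v : Plane => ((v 0 : ℂ) + (v 1 : ℂ) * Complex.I) :=
    (Complex.continuous_ofReal.comp h0).add
      ((Complex.continuous_ofReal.comp h1).mul continuous_const)
  exact this.congr fun v => (Complex.mk_eq_add_mul_I _ _).symm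

lemma toC_comb (a b : ℝ) (u v : Plane) :
    toC (a • u + b • v) = (a : ℂ) * toC u + (b : ℂ) * toC v := by
  apply Complex.ext <;>
    simp [toC, PiLp.add_apply, PiLp.smul_apply]

lemma toC_affine (A B : Plane) (t : ℝ) :
    toC (A + t • (B - A)) = toC A + (t : ℂ) * (toC B - toC A) := by
  apply Complex.ext <;> simp [toC, PiLp.add_apply, PiLp.smul_apply, PiLp.sub_apply] <;> ring

lemma abs_toC (q : Plane) : ‖toC q‖ = ‖q‖ := by
  rw [Complex.norm_def, Complex.normSq_apply, EuclideanSpace.norm_eq]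
  simp [Fin.sum_univ_two, sq]

/-- The "angle subtended" term for one side. -/
def ratio (u v q : Plane) : ℂ := (toC v - toC q) / (toC u - toC q)

def term (u v q : Plane) : ℝ := Complex.arg (ratio u v q)

lemma sub_toC_ne_zero {u q : Plane} (h : u ≠ q) : toC u - toC q ≠ 0 := by
  intro hc
  exact h (toC_inj (by linear_combination (norm := module) hc))

lemma ratio_of_openSegment {u v q : Plane} (huv : u ≠ v) (h : q ∈ openSegment ℝ u v) :
    ∃ r : ℝ, r < 0 ∧ ratio u v q = (r : ℂ) := by
  rw [openSegment_eq_image'] at h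
  obtain ⟨t, ht, rfl⟩ := h
  obtain ⟨ht0, ht1⟩ := ht
  have hvu : toC v - toC u ≠ 0 := sub_toC_ne_zero (Ne.symm huv)
  refine ⟨(1 - t) / (-t), div_neg_of_pos_of_neg (by linarith) (by linarith), ?_⟩
  show (toC v - toC (u + t • (v - u))) / (toC u - toC (u + t • (v - u))) = _
  rw [toC_affine]
  have hden : toC u - (toC u + (t:ℂ) * (toC v - toC u)) = -(t:ℂ) * (toC v - toC u) := by ring
  have hnum : toC v - (toC u + (t:ℂ) * (toC v - toC u)) = (1 - (t:ℂ)) * (toC v - toC u) := by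
    ring
  rw [hden, hnum, mul_div_mul_right _ _ hvu]
  have htne : (t:ℂ) ≠ 0 := by exact_mod_cast ht0.ne'
  push_cast
  field_simp


lemma mem_segment_of_ratio_nonpos {u v q : Plane} (huq : u ≠ q) (hvq : v ≠ q)
    (h : (ratio u v q).re ≤ 0) (h' : (ratio u v q).im = 0) : q ∈ segment ℝ u v := by
  have hden : toC u - toC q ≠ 0 := sub_toC_ne_zero huq
  set r : ℝ := (ratio u v q).re with hr
  have hratio : ratio u v q = (r : ℂ) := by
    apply Complex.ext
    · simp [hr]
    · simpa using h'
  have hre : toC v - toC q = (r : ℂ) * (toC u - toC q) := by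
    have := hratio
    rw [ratio, div_eq_iff hden] at this
    exact this
  have hrneg : r < 0 := by
    rcases lt_or_eq_of_le h with h1 | h1
    · exact h1
    · exfalso
      apply sub_toC_ne_zero hvq
      rw [hre]
      simp [h1]
  have h1r : (0:ℝ) < 1 - r := by linarith
  refine ⟨-r / (1 - r), 1 / (1 - r), div_nonneg (by linarith) (by linarith), by positivity, ?_, ?_⟩
  · rw [← add_div, div_eq_one_iff_eq h1r.ne']
    ring
  · apply toC_inj
    rw [toC_comb]
    have hcast : ((1 - r : ℝ) : ℂ) ≠ 0 := by exact_mod_cast h1r.ne'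
    push_cast at hcast ⊢
    rw [div_mul_eq_mul_div, div_mul_eq_mul_div, ← add_div, div_eq_iff hcast]
    linear_combination hre

lemma ratio_mem_slitPlane {u v q : Plane} (hq : q ∉ segment ℝ u v) :
    ratio u v q ∈ Complex.slitPlane := by
  have huq : u ≠ q := fun h => hq (h ▸ left_mem_segment ℝ u v)
  have hvq : v ≠ q := fun h => hq (h ▸ right_mem_segment ℝ u v)
  rw [Complex.mem_slitPlane_iff]
  by_contra hc
  push_neg at hc
  exact hq (mem_segment_of_ratio_nonpos huq hvq hc.1 hc.2)

lemma continuousAt_ratio {u v : Plane} {q₀ : Plane} (huq : u ≠ q₀) :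
    ContinuousAt (ratio u v) q₀ := by
  have hden : toC u - toC q₀ ≠ 0 := sub_toC_ne_zero huq
  exact ((continuous_const.sub continuous_toC).continuousAt).div
    ((continuous_const.sub continuous_toC).continuousAt) hden

lemma continuousAt_term {u v : Plane} {q₀ : Plane} (hq : q₀ ∉ segment ℝ u v) :
    ContinuousAt (term u v) q₀ := by
  have huq : u ≠ q₀ := fun h => hq (h ▸ left_mem_segment ℝ u v)
  exact (Complex.continuousAt_arg (ratio_mem_slitPlane hq)).comp (continuousAt_ratio huq)

/-- The total winding sum around the closed quadrilateral `P₁P₂P₃P₄`. -/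
def wind (P₁ P₂ P₃ P₄ : Plane) (q : Plane) : ℝ :=
  term P₁ P₂ q + term P₂ P₃ q + term P₃ P₄ q + term P₄ P₁ q

open Real in
lemma wind_int {P₁ P₂ P₃ P₄ q : Plane} (h1 : P₁ ≠ q) (h2 : P₂ ≠ q) (h3 : P₃ ≠ q)
    (h4 : P₄ ≠ q) : ∃ n : ℤ, wind P₁ P₂ P₃ P₄ q = n * (2 * π) := by
  set w₁ := toC P₁ - toC q
  set w₂ := toC P₂ - toC q
  set w₃ := toC P₃ - toC q
  set w₄ := toC P₄ - toC q
  have hw₁ : w₁ ≠ 0 := sub_toC_ne_zero h1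
  have hw₂ : w₂ ≠ 0 := sub_toC_ne_zero h2
  have hw₃ : w₃ ≠ 0 := sub_toC_ne_zero h3
  have hw₄ : w₄ ≠ 0 := sub_toC_ne_zero h4
  have key : ∀ z : ℂ, z ≠ 0 → Complex.exp (Complex.arg z * Complex.I) = z / (‖z‖ : ℂ) := by
    intro z hz
    have h0 := Complex.norm_mul_exp_arg_mul_I z
    have habs : (‖z‖ : ℂ) ≠ 0 := by
      exact_mod_cast (norm_ne_zero_iff.2 hz)
    rw [eq_div_iff habs]
    linear_combination h0
  have hr1 : ratio P₁ P₂ q = w₂ / w₁ := rfl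
  have hr2 : ratio P₂ P₃ q = w₃ / w₂ := rfl
  have hr3 : ratio P₃ P₄ q = w₄ / w₃ := rfl
  have hr4 : ratio P₄ P₁ q = w₁ / w₄ := rfl
  have hprod : (w₂/w₁) * (w₃/w₂) * (w₄/w₃) * (w₁/w₄) = 1 := by
    field_simp
  have habs' : (‖w₂/w₁‖) * (‖w₃/w₂‖) * (‖w₄/w₃‖)
      * (‖w₁/w₄‖) = 1 := by
    rw [← norm_mul, ← norm_mul, ← norm_mul, hprod, norm_one]
  have hexp : Complex.exp ((wind P₁ P₂ P₃ P₄ q : ℝ) * Complex.I) = 1 := by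
    have e1 := key _ (div_ne_zero hw₂ hw₁)
    have e2 := key _ (div_ne_zero hw₃ hw₂)
    have e3 := key _ (div_ne_zero hw₄ hw₃)
    have e4 := key _ (div_ne_zero hw₁ hw₄)
    have expand : ((wind P₁ P₂ P₃ P₄ q : ℝ) : ℂ) * Complex.I
        = (term P₁ P₂ q : ℂ) * Complex.I + (term P₂ P₃ q : ℂ) * Complex.I
          + (term P₃ P₄ q : ℂ) * Complex.I + (term P₄ P₁ q : ℂ) * Complex.I := by
      rw [wind]
      push_cast
      ring
    rw [expand, Complex.exp_add, Complex.exp_add, Complex.exp_add]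
    rw [term, term, term, term, hr1, hr2, hr3, hr4, e1, e2, e3, e4]
    rw [div_mul_div_comm, div_mul_div_comm, div_mul_div_comm, hprod]
    rw [show ((‖w₂/w₁‖ : ℂ) * (‖w₃/w₂‖) * (‖w₄/w₃‖)
      * (‖w₁/w₄‖)) = ((‖w₂/w₁‖ * ‖w₃/w₂‖
      * ‖w₄/w₃‖ * ‖w₁/w₄‖ : ℝ) : ℂ) by push_cast; ring]
    rw [habs']
    norm_num
  rw [Complex.exp_eq_one_iff] at hexp
  obtain ⟨n, hn⟩ := hexp
  refine ⟨n, ?_⟩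
  have hn' : ((wind P₁ P₂ P₃ P₄ q : ℝ) : ℂ) * Complex.I = ((n : ℝ) * (2 * π) : ℝ) * Complex.I := by
    rw [hn]
    push_cast
    ring
  have := mul_right_cancel₀ Complex.I_ne_zero hn'
  exact_mod_cast this


open Real in
lemma re_ratio_pos_far {u v q : Plane} {M : ℝ} (hu : ‖toC u‖ ≤ M)
    (hv : ‖toC v‖ ≤ M) (hq : 4 * M + 1 ≤ ‖toC q‖) :
    0 < (ratio u v q).re := by
  set U := toC u
  set V := toC v
  set Q := toC q
  have hM : 0 ≤ M := le_trans (norm_nonneg _) hu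
  have haq : (0:ℝ) < ‖Q‖ := by
    have : (0:ℝ) < 4 * M + 1 := by linarith
    linarith
  have hUQ : U - Q ≠ 0 := by
    intro hc
    have : U = Q := by linear_combination (norm := module) hc
    rw [this] at hu
    linarith
  have hre : (ratio u v q).re = ((V - Q) * (starRingEnd ℂ) (U - Q)).re / Complex.normSq (U - Q) := by
    rw [ratio]
    rw [div_eq_mul_inv, Complex.inv_def, ← mul_assoc, mul_comm, Complex.re_ofReal_mul]
    rw [div_eq_inv_mul]
  rw [hre]
  apply div_pos ?_ (Complex.normSq_pos.2 hUQ)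
  have expand : ((V - Q) * (starRingEnd ℂ) (U - Q)).re
      = (V * (starRingEnd ℂ) U).re - (V * (starRingEnd ℂ) Q).re
        - (Q * (starRingEnd ℂ) U).re + Complex.normSq Q := by
    simp [Complex.mul_re, Complex.normSq_apply]
    ring
  rw [expand]
  have b1 : |(V * (starRingEnd ℂ) U).re| ≤ M * M := by
    calc |(V * (starRingEnd ℂ) U).re| ≤ ‖V * (starRingEnd ℂ) U‖ :=
          Complex.abs_re_le_norm _
      _ = ‖V‖ * ‖U‖ := by rw [norm_mul, Complex.norm_conj]
      _ ≤ M * M := by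
          apply mul_le_mul hv hu (norm_nonneg _) hM
  have b2 : |(V * (starRingEnd ℂ) Q).re| ≤ M * ‖Q‖ := by
    calc |(V * (starRingEnd ℂ) Q).re| ≤ ‖V * (starRingEnd ℂ) Q‖ :=
          Complex.abs_re_le_norm _
      _ = ‖V‖ * ‖Q‖ := by rw [norm_mul, Complex.norm_conj]
      _ ≤ M * ‖Q‖ := by
          apply mul_le_mul_of_nonneg_right hv haq.le
  have b3 : |(Q * (starRingEnd ℂ) U).re| ≤ M * ‖Q‖ := by
    calc |(Q * (starRingEnd ℂ) U).re| ≤ ‖Q * (starRingEnd ℂ) U‖ :=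
          Complex.abs_re_le_norm _
      _ = ‖Q‖ * ‖U‖ := by rw [norm_mul, Complex.norm_conj]
      _ ≤ M * ‖Q‖ := by
          rw [mul_comm]
          apply mul_le_mul_of_nonneg_right hu haq.le
  have hnsq : Complex.normSq Q = ‖Q‖ * ‖Q‖ := by
    rw [← Complex.sq_norm, sq]
  rw [hnsq]
  have h1 := abs_le.1 b1
  have h2 := abs_le.1 b2
  have h3 := abs_le.1 b3
  nlinarith [mul_nonneg (sub_nonneg.2 hq) (by nlinarith : (0:ℝ) ≤ ‖Q‖ + (4*M+1) - 2*M)]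

open Real in
lemma wind_far_zero {P₁ P₂ P₃ P₄ q : Plane} {M : ℝ}
    (h1 : ‖toC P₁‖ ≤ M) (h2 : ‖toC P₂‖ ≤ M)
    (h3 : ‖toC P₃‖ ≤ M) (h4 : ‖toC P₄‖ ≤ M)
    (hq : 4 * M + 1 ≤ ‖toC q‖) : wind P₁ P₂ P₃ P₄ q = 0 := by
  have hM : 0 ≤ M := le_trans (norm_nonneg _) h1
  have hne : ∀ P : Plane, ‖toC P‖ ≤ M → P ≠ q := by
    intro P hP hc
    rw [hc] at hP
    linarith
  obtain ⟨n, hn⟩ := wind_int (hne _ h1) (hne _ h2) (hne _ h3) (hne _ h4)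
  have habs : ∀ u v : Plane, ‖toC u‖ ≤ M → ‖toC v‖ ≤ M →
      |term u v q| < π / 2 := by
    intro u v hu hv
    exact Complex.abs_arg_lt_pi_div_two_iff.2 (Or.inl (re_ratio_pos_far hu hv hq))
  have t1 := abs_le.1 (le_of_lt (habs _ _ h1 h2))
  have t2 := abs_le.1 (le_of_lt (habs _ _ h2 h3))
  have t3 := abs_le.1 (le_of_lt (habs _ _ h3 h4))
  have t4 := abs_le.1 (le_of_lt (habs _ _ h4 h1))
  have hb : |wind P₁ P₂ P₃ P₄ q| < 2 * π := by
    rw [wind]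
    have hpi := pi_pos
    have s1 := (habs _ _ h1 h2)
    have s2 := (habs _ _ h2 h3)
    have s3 := (habs _ _ h3 h4)
    have s4 := (habs _ _ h4 h1)
    rw [abs_lt] at s1 s2 s3 s4 ⊢
    constructor <;> [linarith [s1.1, s2.1, s3.1, s4.1]; linarith [s1.2, s2.2, s3.2, s4.2]]
  rw [hn] at hb ⊢
  have hpi := pi_pos
  have : |(n:ℝ)| < 1 := by
    rw [abs_mul, abs_of_pos (by linarith : (0:ℝ) < 2 * π)] at hb
    by_contra hc
    push_neg at hc
    nlinarith
  have : n = 0 := by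
    have h' : |n| < 1 := by exact_mod_cast this
    rcases abs_lt.1 h' with ⟨ha, hb⟩
    omega
  simp [this]

open Real in
lemma wind_const_on {S : Set Plane} (hS : IsPreconnected S) {P₁ P₂ P₃ P₄ : Plane}
    (hdisj : ∀ q ∈ S, q ∉ segment ℝ P₁ P₂ ∧ q ∉ segment ℝ P₂ P₃ ∧ q ∉ segment ℝ P₃ P₄ ∧
      q ∉ segment ℝ P₄ P₁)
    {x y : Plane} (hx : x ∈ S) (hy : y ∈ S) :
    wind P₁ P₂ P₃ P₄ x = wind P₁ P₂ P₃ P₄ y := by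
  set f := wind P₁ P₂ P₃ P₄ with hf
  have hcont : ContinuousOn f S := by
    intro q hq
    obtain ⟨d1, d2, d3, d4⟩ := hdisj q hq
    exact (((continuousAt_term d1).add (continuousAt_term d2)).add
      ((continuousAt_term d3))).add (continuousAt_term d4) |>.continuousWithinAt
  have hval : ∀ q ∈ S, ∃ n : ℤ, f q = n * (2 * π) := by
    intro q hq
    obtain ⟨d1, d2, d3, d4⟩ := hdisj q hq
    exact wind_int (fun hc => d1 (hc ▸ left_mem_segment ℝ P₁ P₂))
      (fun hc => d2 (hc ▸ left_mem_segment ℝ P₂ P₃))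
      (fun hc => d3 (hc ▸ left_mem_segment ℝ P₃ P₄))
      (fun hc => d4 (hc ▸ left_mem_segment ℝ P₄ P₁))
  by_contra hne
  have himg : IsPreconnected (f '' S) := hS.image f hcont
  obtain ⟨m, hm⟩ := hval x hx
  obtain ⟨n, hn⟩ := hval y hy
  have hpi := pi_pos
  wlog hlt : f x < f y generalizing x y m n
  · exact this hy hx (Ne.symm hne) n hn m hm
      (lt_of_le_of_ne (not_lt.1 hlt) (Ne.symm hne))
  have hmn : m < n := by
    rw [hm, hn] at hlt
    by_contra hc
    push_neg at hc
    have : (n:ℝ) ≤ (m:ℝ) := by exact_mod_cast hc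
    nlinarith
  have hmid : f x + π ∈ Set.Icc (f x) (f y) := by
    constructor
    · linarith
    · rw [hm, hn]
      have : (m:ℝ) + 1 ≤ (n:ℝ) := by exact_mod_cast hmn
      nlinarith
  have : f x + π ∈ f '' S :=
    himg.Icc_subset ⟨x, hx, rfl⟩ ⟨y, hy, rfl⟩ hmid
  obtain ⟨z, hz, hzv⟩ := this
  obtain ⟨k, hk⟩ := hval z hz
  rw [hk, hm] at hzv
  have : (1:ℝ) = 2 * ((k:ℝ) - m) := by
    have := hzv
    field_simp at this ⊢
    nlinarith
  have : (1:ℤ) = 2 * (k - m) := by exact_mod_cast this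
  omega


lemma div_im' (z w : ℂ) : (z / w).im = (z * (starRingEnd ℂ) w).im / Complex.normSq w := by
  rw [div_eq_mul_inv, Complex.inv_def, ← mul_assoc, mul_comm, Complex.im_ofReal_mul,
    div_eq_inv_mul]

lemma im_mul_conj_eq (z w : ℂ) :
    (z * (starRingEnd ℂ) w).im = (z / w).im * Complex.normSq w := by
  rcases eq_or_ne w 0 with rfl | hw
  · simp
  · rw [div_im', div_mul_cancel₀]
    simpa [Complex.normSq_eq_zero] using hw

open Real Topology in
lemma tendsto_arg_upper {l : Filter ℝ} {u : ℝ → ℂ} {r : ℝ} (hr : r < 0)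
    (hu : Filter.Tendsto u l (𝓝 ((r : ℝ) : ℂ))) (him : ∀ᶠ t in l, 0 ≤ (u t).im) :
    Filter.Tendsto (fun t => Complex.arg (u t)) l (𝓝 π) := by
  have hlim := Complex.tendsto_arg_nhdsWithin_im_nonneg_of_re_neg_of_im_zero
    (z := ((r : ℝ) : ℂ)) (by simpa using hr) (by simp)
  exact hlim.comp (tendsto_nhdsWithin_iff.2 ⟨hu, him⟩)

open Real Topology in
lemma tendsto_arg_lower {l : Filter ℝ} {u : ℝ → ℂ} {r : ℝ} (hr : r < 0)
    (hu : Filter.Tendsto u l (𝓝 ((r : ℝ) : ℂ))) (him : ∀ᶠ t in l, (u t).im < 0) :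
    Filter.Tendsto (fun t => Complex.arg (u t)) l (𝓝 (-π)) := by
  have hlim := Complex.tendsto_arg_nhdsWithin_im_neg_of_re_neg_of_im_zero
    (z := ((r : ℝ) : ℂ)) (by simpa using hr) (by simp)
  exact hlim.comp (tendsto_nhdsWithin_iff.2 ⟨hu, him⟩)

open Real Topology Filter in
/-- Crossing a quadrilateral exactly once flips the winding number. -/
lemma wind_ne {P₁ P₂ P₃ P₄ A B p : Plane}
    (h12 : P₁ ≠ P₂) (hAB : A ≠ B)
    (hp1 : p ∈ openSegment ℝ A B) (hp2 : p ∈ openSegment ℝ P₁ P₂)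
    (hcap : segment ℝ A B ∩ segment ℝ P₁ P₂ ⊆ {p})
    (hd2 : segment ℝ A B ∩ segment ℝ P₂ P₃ = ∅)
    (hd3 : segment ℝ A B ∩ segment ℝ P₃ P₄ = ∅)
    (hd4 : segment ℝ A B ∩ segment ℝ P₄ P₁ = ∅)
    (hcross : ((toC P₂ - toC P₁) * (starRingEnd ℂ) (toC B - toC A)).im ≠ 0) :
    wind P₁ P₂ P₃ P₄ A ≠ wind P₁ P₂ P₃ P₄ B := by
  set γ : ℝ → Plane := fun t => A + t • (B - A) with hγdef
  have hγcont : Continuous γ := by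
    apply continuous_const.add
    exact (continuous_id.smul continuous_const)
  obtain ⟨t₀, ht₀, hpt₀⟩ : ∃ t₀ ∈ Set.Ioo (0:ℝ) 1, γ t₀ = p := by
    rw [openSegment_eq_image'] at hp1
    obtain ⟨t, ht, h⟩ := hp1
    exact ⟨t, ht, h⟩
  obtain ⟨ht₀0, ht₀1⟩ := ht₀
  have hγ0 : γ 0 = A := by simp [hγdef]
  have hγ1 : γ 1 = B := by simp [hγdef]
  have hγinj : ∀ {s t : ℝ}, γ s = γ t → s = t := by
    intro s t h
    have hBA : B - A ≠ 0 := sub_ne_zero.2 (Ne.symm hAB)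
    have : s • (B - A) = t • (B - A) := by
      have := h
      simp only [hγdef] at this
      exact add_left_cancel this
    have : (s - t) • (B - A) = 0 := by rw [sub_smul, this, sub_self]
    rcases smul_eq_zero.1 this with h' | h'
    · linarith [sub_eq_zero.1 (by linarith [h'] : s - t = 0)]
    · exact absurd h' hBA
  have hseg : ∀ t ∈ Set.Icc (0:ℝ) 1, γ t ∈ segment ℝ A B := by
    intro t ht
    rw [segment_eq_image']
    exact ⟨t, ht, rfl⟩
  -- γ avoids all four sides away from t₀
  have havoid1 : ∀ t ∈ Set.Icc (0:ℝ) 1, t ≠ t₀ → γ t ∉ segment ℝ P₁ P₂ := by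
    intro t ht hne hmem
    have h' : γ t ∈ ({p} : Set Plane) := hcap ⟨hseg t ht, hmem⟩
    rw [Set.mem_singleton_iff, ← hpt₀] at h'
    exact hne (hγinj h')
  have havoid2 : ∀ t ∈ Set.Icc (0:ℝ) 1, γ t ∉ segment ℝ P₂ P₃ := by
    intro t ht hmem
    exact Set.eq_empty_iff_forall_notMem.1 hd2 _ ⟨hseg t ht, hmem⟩
  have havoid3 : ∀ t ∈ Set.Icc (0:ℝ) 1, γ t ∉ segment ℝ P₃ P₄ := by
    intro t ht hmem
    exact Set.eq_empty_iff_forall_notMem.1 hd3 _ ⟨hseg t ht, hmem⟩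
  have havoid4 : ∀ t ∈ Set.Icc (0:ℝ) 1, γ t ∉ segment ℝ P₄ P₁ := by
    intro t ht hmem
    exact Set.eq_empty_iff_forall_notMem.1 hd4 _ ⟨hseg t ht, hmem⟩
  have hpP₁ : P₁ ≠ p := by
    intro h
    rw [← h] at hp2
    rw [left_mem_openSegment_iff] at hp2
    exact h12 hp2
  -- the moving ratio for side one
  set u : ℝ → ℂ := fun t => ratio P₁ P₂ (γ t) with hudef
  obtain ⟨r, hrneg, hrval⟩ := ratio_of_openSegment h12 hp2
  have hu_cont : Filter.Tendsto u (𝓝 t₀) (𝓝 ((r : ℝ) : ℂ)) := by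
    have h1 : ContinuousAt (ratio P₁ P₂) (γ t₀) := by
      rw [hpt₀]; exact continuousAt_ratio hpP₁
    have h2 : ContinuousAt u t₀ := h1.comp hγcont.continuousAt
    have h3 := h2.tendsto
    have : u t₀ = ((r : ℝ) : ℂ) := by rw [hudef]; simp only [hpt₀]; exact hrval
    rwa [this] at h3
  -- the affine vertical coordinate
  set c : ℝ := ((toC P₂ - toC P₁) * (starRingEnd ℂ) (toC B - toC A)).im with hcdef
  have hcr : ∀ t : ℝ,
      ((toC P₂ - toC (γ t)) * (starRingEnd ℂ) (toC P₁ - toC (γ t))).im = (t₀ - t) * c := by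
    have hcr0 : ((toC P₂ - toC (γ t₀)) * (starRingEnd ℂ) (toC P₁ - toC (γ t₀))).im = 0 := by
      rw [hpt₀, im_mul_conj_eq]
      have : (toC P₂ - toC p) / (toC P₁ - toC p) = ((r:ℝ):ℂ) := hrval
      rw [this]
      simp
    intro t
    have expand : ∀ s : ℝ,
        ((toC P₂ - toC (γ s)) * (starRingEnd ℂ) (toC P₁ - toC (γ s))).im
        = ((toC P₂ - toC A) * (starRingEnd ℂ) (toC P₁ - toC A)).im - s * c := by
      intro s
      show ((toC P₂ - toC (A + s • (B - A))) * (starRingEnd ℂ) (toC P₁ - toC (A + s • (B - A)))).im = _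
      rw [toC_affine, hcdef]
      simp only [Complex.mul_im, Complex.mul_re, Complex.sub_re, Complex.sub_im, Complex.add_re,
        Complex.add_im, Complex.ofReal_re, Complex.ofReal_im, map_sub, Complex.conj_re,
        Complex.conj_im]
      ring
    have e1 := expand t
    have e2 := expand t₀
    rw [e2] at hcr0
    rw [e1]
    linarith [hcr0]
  have hc0 : c ≠ 0 := hcross
  have hden : ∀ t ∈ Set.Icc (0:ℝ) 1, toC P₁ - toC (γ t) ≠ 0 := by
    intro t ht
    rcases eq_or_ne t t₀ with rfl | hne
    · rw [hpt₀]; exact sub_toC_ne_zero hpP₁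
    · intro hc
      have h' : P₁ = γ t := toC_inj (by linear_combination (norm := module) hc)
      exact havoid1 t ht hne (h' ▸ left_mem_segment ℝ P₁ P₂)
  have him : ∀ t ∈ Set.Icc (0:ℝ) 1,
      (u t).im = (t₀ - t) * c / Complex.normSq (toC P₁ - toC (γ t)) := by
    intro t ht
    show (ratio P₁ P₂ (γ t)).im = _
    rw [ratio, div_im', hcr t]
  have hnsqpos : ∀ t ∈ Set.Icc (0:ℝ) 1, 0 < Complex.normSq (toC P₁ - toC (γ t)) :=
    fun t ht => Complex.normSq_pos.2 (hden t ht)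
  have hmemIoo1 : ∀ t ∈ Set.Ioo (0:ℝ) t₀, t ∈ Set.Icc (0:ℝ) 1 :=
    fun t ht => ⟨ht.1.le, le_trans ht.2.le ht₀1.le⟩
  have hmemIoo2 : ∀ t ∈ Set.Ioo t₀ (1:ℝ), t ∈ Set.Icc (0:ℝ) 1 :=
    fun t ht => ⟨le_trans ht₀0.le ht.1.le, ht.2.le⟩
  have huA : Tendsto u (𝓝[<] t₀) (𝓝 ((r : ℝ) : ℂ)) := hu_cont.mono_left nhdsWithin_le_nhds
  have huB : Tendsto u (𝓝[>] t₀) (𝓝 ((r : ℝ) : ℂ)) := hu_cont.mono_left nhdsWithin_le_nhds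
  obtain ⟨eA, heA, hlim1, hlim2⟩ : ∃ eA : ℝ, (eA = π ∨ eA = -π) ∧
      Tendsto (fun t => Complex.arg (u t)) (𝓝[<] t₀) (𝓝 eA) ∧
      Tendsto (fun t => Complex.arg (u t)) (𝓝[>] t₀) (𝓝 (-eA)) := by
    rcases lt_or_gt_of_ne hc0 with hcneg | hcpos
    · refine ⟨-π, Or.inr rfl, ?_, ?_⟩
      · apply tendsto_arg_lower hrneg huA
        filter_upwards [Ioo_mem_nhdsLT ht₀0] with t ht
        rw [him t (hmemIoo1 t ht)]
        apply div_neg_of_neg_of_pos ?_ (hnsqpos t (hmemIoo1 t ht))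
        nlinarith [ht.2]
      · rw [neg_neg]
        apply tendsto_arg_upper hrneg huB
        filter_upwards [Ioo_mem_nhdsGT ht₀1] with t ht
        rw [him t (hmemIoo2 t ht)]
        apply le_of_lt
        apply div_pos ?_ (hnsqpos t (hmemIoo2 t ht))
        nlinarith [ht.1]
    · refine ⟨π, Or.inl rfl, ?_, ?_⟩
      · apply tendsto_arg_upper hrneg huA
        filter_upwards [Ioo_mem_nhdsLT ht₀0] with t ht
        rw [him t (hmemIoo1 t ht)]
        apply le_of_lt
        apply div_pos ?_ (hnsqpos t (hmemIoo1 t ht))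
        nlinarith [ht.2]
      · apply tendsto_arg_lower hrneg huB
        filter_upwards [Ioo_mem_nhdsGT ht₀1] with t ht
        rw [him t (hmemIoo2 t ht)]
        apply div_neg_of_neg_of_pos ?_ (hnsqpos t (hmemIoo2 t ht))
        nlinarith [ht.1]
  -- the other three sides are continuous through the crossing
  have hpA : p ∈ segment ℝ A B := openSegment_subset_segment ℝ A B hp1
  have d2 : p ∉ segment ℝ P₂ P₃ :=
    fun h => Set.eq_empty_iff_forall_notMem.1 hd2 p ⟨hpA, h⟩
  have d3 : p ∉ segment ℝ P₃ P₄ :=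
    fun h => Set.eq_empty_iff_forall_notMem.1 hd3 p ⟨hpA, h⟩
  have d4 : p ∉ segment ℝ P₄ P₁ :=
    fun h => Set.eq_empty_iff_forall_notMem.1 hd4 p ⟨hpA, h⟩
  set rest : ℝ → ℝ := fun t => term P₂ P₃ (γ t) + term P₃ P₄ (γ t) + term P₄ P₁ (γ t)
    with hrestdef
  have hrest_cont : ContinuousAt rest t₀ := by
    have k2 : ContinuousAt (fun t => term P₂ P₃ (γ t)) t₀ := by
      have : ContinuousAt (term P₂ P₃) (γ t₀) := by rw [hpt₀]; exact continuousAt_term d2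
      exact this.comp hγcont.continuousAt
    have k3 : ContinuousAt (fun t => term P₃ P₄ (γ t)) t₀ := by
      have : ContinuousAt (term P₃ P₄) (γ t₀) := by rw [hpt₀]; exact continuousAt_term d3
      exact this.comp hγcont.continuousAt
    have k4 : ContinuousAt (fun t => term P₄ P₁ (γ t)) t₀ := by
      have : ContinuousAt (term P₄ P₁) (γ t₀) := by rw [hpt₀]; exact continuousAt_term d4
      exact this.comp hγcont.continuousAt
    exact (k2.add k3).add k4
  have hWeq : ∀ t : ℝ, wind P₁ P₂ P₃ P₄ (γ t) = Complex.arg (u t) + rest t := by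
    intro t
    rw [wind, hrestdef]
    show term P₁ P₂ (γ t) + term P₂ P₃ (γ t) + term P₃ P₄ (γ t) + term P₄ P₁ (γ t) = _
    rw [show Complex.arg (u t) = term P₁ P₂ (γ t) from rfl]
    ring
  have hrest_lim1 : Tendsto rest (𝓝[<] t₀) (𝓝 (rest t₀)) :=
    hrest_cont.tendsto.mono_left nhdsWithin_le_nhds
  have hrest_lim2 : Tendsto rest (𝓝[>] t₀) (𝓝 (rest t₀)) :=
    hrest_cont.tendsto.mono_left nhdsWithin_le_nhds
  -- constancy of wind on the two half-open pieces
  have hconstA : ∀ t ∈ Set.Ioo (0:ℝ) t₀, wind P₁ P₂ P₃ P₄ (γ t) = wind P₁ P₂ P₃ P₄ A := by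
    intro t ht
    have hsub : Set.Icc (0:ℝ) t ⊆ Set.Icc (0:ℝ) 1 :=
      Set.Icc_subset_Icc le_rfl (le_trans ht.2.le ht₀1.le)
    have hS : IsPreconnected (γ '' Set.Icc 0 t) :=
      (isPreconnected_Icc).image γ hγcont.continuousOn
    have hdisj : ∀ q ∈ γ '' Set.Icc (0:ℝ) t, q ∉ segment ℝ P₁ P₂ ∧ q ∉ segment ℝ P₂ P₃ ∧
        q ∉ segment ℝ P₃ P₄ ∧ q ∉ segment ℝ P₄ P₁ := by
      rintro q ⟨s, hs, rfl⟩
      have hs1 : s ∈ Set.Icc (0:ℝ) 1 := hsub hs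
      have hsne : s ≠ t₀ := by
        intro hc
        rw [hc] at hs
        linarith [hs.2, ht.2]
      exact ⟨havoid1 s hs1 hsne, havoid2 s hs1, havoid3 s hs1, havoid4 s hs1⟩
    have hx : γ t ∈ γ '' Set.Icc (0:ℝ) t := ⟨t, ⟨ht.1.le, le_rfl⟩, rfl⟩
    have hy : A ∈ γ '' Set.Icc (0:ℝ) t := ⟨0, ⟨le_rfl, ht.1.le⟩, hγ0⟩
    exact wind_const_on hS hdisj hx hy
  have hconstB : ∀ t ∈ Set.Ioo t₀ (1:ℝ), wind P₁ P₂ P₃ P₄ (γ t) = wind P₁ P₂ P₃ P₄ B := by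
    intro t ht
    have hsub : Set.Icc t (1:ℝ) ⊆ Set.Icc (0:ℝ) 1 :=
      Set.Icc_subset_Icc (le_trans ht₀0.le ht.1.le) le_rfl
    have hS : IsPreconnected (γ '' Set.Icc t 1) :=
      (isPreconnected_Icc).image γ hγcont.continuousOn
    have hdisj : ∀ q ∈ γ '' Set.Icc t (1:ℝ), q ∉ segment ℝ P₁ P₂ ∧ q ∉ segment ℝ P₂ P₃ ∧
        q ∉ segment ℝ P₃ P₄ ∧ q ∉ segment ℝ P₄ P₁ := by
      rintro q ⟨s, hs, rfl⟩
      have hs1 : s ∈ Set.Icc (0:ℝ) 1 := hsub hs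
      have hsne : s ≠ t₀ := by
        intro hc
        rw [hc] at hs
        linarith [hs.1, ht.1]
      exact ⟨havoid1 s hs1 hsne, havoid2 s hs1, havoid3 s hs1, havoid4 s hs1⟩
    have hx : γ t ∈ γ '' Set.Icc t (1:ℝ) := ⟨t, ⟨le_rfl, ht.2.le⟩, rfl⟩
    have hy : B ∈ γ '' Set.Icc t (1:ℝ) := ⟨1, ⟨ht.2.le, le_rfl⟩, hγ1⟩
    exact wind_const_on hS hdisj hx hy
  have hlimWA : Tendsto (fun t => wind P₁ P₂ P₃ P₄ (γ t)) (𝓝[<] t₀)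
      (𝓝 (wind P₁ P₂ P₃ P₄ A)) := by
    apply Tendsto.congr' ?_ tendsto_const_nhds
    filter_upwards [Ioo_mem_nhdsLT ht₀0] with t ht
    exact (hconstA t ht).symm
  have hlimWB : Tendsto (fun t => wind P₁ P₂ P₃ P₄ (γ t)) (𝓝[>] t₀)
      (𝓝 (wind P₁ P₂ P₃ P₄ B)) := by
    apply Tendsto.congr' ?_ tendsto_const_nhds
    filter_upwards [Ioo_mem_nhdsGT ht₀1] with t ht
    exact (hconstB t ht).symm
  have hlimWA' : Tendsto (fun t => wind P₁ P₂ P₃ P₄ (γ t)) (𝓝[<] t₀) (𝓝 (eA + rest t₀)) :=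
    (hlim1.add hrest_lim1).congr (fun t => (hWeq t).symm)
  have hlimWB' : Tendsto (fun t => wind P₁ P₂ P₃ P₄ (γ t)) (𝓝[>] t₀) (𝓝 (-eA + rest t₀)) :=
    (hlim2.add hrest_lim2).congr (fun t => (hWeq t).symm)
  have hAeq : wind P₁ P₂ P₃ P₄ A = eA + rest t₀ := tendsto_nhds_unique hlimWA hlimWA'
  have hBeq : wind P₁ P₂ P₃ P₄ B = -eA + rest t₀ := tendsto_nhds_unique hlimWB hlimWB'
  have hpi := pi_pos
  intro hc
  rw [hAeq, hBeq] at hc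
  rcases heA with rfl | rfl <;> linarith


lemma isClosed_segment' (x y : Plane) : IsClosed (segment ℝ x y) := by
  rw [segment_eq_image']
  have : Continuous fun t : ℝ => x + t • (y - x) :=
    continuous_const.add (continuous_id.smul continuous_const)
  exact (isCompact_Icc.image this).isClosed

open Real Bornology in
/-- One of the endpoints of a segment crossing a closed quadrilateral exactly once lies in a
bounded complementary component. -/
lemma bounded_component {P₁ P₂ P₃ P₄ A B p : Plane}
    (h12 : P₁ ≠ P₂) (hAB : A ≠ B)
    (hp1 : p ∈ openSegment ℝ A B) (hp2 : p ∈ openSegment ℝ P₁ P₂)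
    (hcap : segment ℝ A B ∩ segment ℝ P₁ P₂ ⊆ {p})
    (hd2 : segment ℝ A B ∩ segment ℝ P₂ P₃ = ∅)
    (hd3 : segment ℝ A B ∩ segment ℝ P₃ P₄ = ∅)
    (hd4 : segment ℝ A B ∩ segment ℝ P₄ P₁ = ∅)
    (hcross : ((toC P₂ - toC P₁) * (starRingEnd ℂ) (toC B - toC A)).im ≠ 0) :
    IsBounded (connectedComponentIn
      (segment ℝ P₁ P₂ ∪ segment ℝ P₂ P₃ ∪ segment ℝ P₃ P₄ ∪ segment ℝ P₄ P₁)ᶜ A) ∨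
    IsBounded (connectedComponentIn
      (segment ℝ P₁ P₂ ∪ segment ℝ P₂ P₃ ∪ segment ℝ P₃ P₄ ∪ segment ℝ P₄ P₁)ᶜ B) := by
  set K : Set Plane :=
    segment ℝ P₁ P₂ ∪ segment ℝ P₂ P₃ ∪ segment ℝ P₃ P₄ ∪ segment ℝ P₄ P₁ with hKdef
  have hABmem : ∀ X : Plane, X ∈ segment ℝ A B → X ∉ openSegment ℝ A B → X ∉ K := by
    intro X hX hXopen hXK
    rcases hXK with ((h | h) | h) | h
    · have : X ∈ ({p} : Set Plane) := hcap ⟨hX, h⟩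
      rw [Set.mem_singleton_iff] at this
      rw [this] at hXopen
      exact hXopen hp1
    · exact Set.eq_empty_iff_forall_notMem.1 hd2 X ⟨hX, h⟩
    · exact Set.eq_empty_iff_forall_notMem.1 hd3 X ⟨hX, h⟩
    · exact Set.eq_empty_iff_forall_notMem.1 hd4 X ⟨hX, h⟩
  have hAnotopen : A ∉ openSegment ℝ A B := by
    rw [left_mem_openSegment_iff]
    exact hAB
  have hBnotopen : B ∉ openSegment ℝ A B := by
    rw [right_mem_openSegment_iff]
    exact hAB
  have hA : A ∉ K := hABmem A (left_mem_segment ℝ A B) hAnotopen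
  have hB : B ∉ K := hABmem B (right_mem_segment ℝ A B) hBnotopen
  by_contra hcon
  push_neg at hcon
  obtain ⟨hbA, hbB⟩ := hcon
  set M : ℝ := max (max (‖toC P₁‖) (‖toC P₂‖))
      (max (‖toC P₃‖) (‖toC P₄‖)) with hMdef
  have hM1 : ‖toC P₁‖ ≤ M := le_max_of_le_left (le_max_left _ _)
  have hM2 : ‖toC P₂‖ ≤ M := le_max_of_le_left (le_max_right _ _)
  have hM3 : ‖toC P₃‖ ≤ M := le_max_of_le_right (le_max_left _ _)
  have hM4 : ‖toC P₄‖ ≤ M := le_max_of_le_right (le_max_right _ _)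
  have key : ∀ X : Plane, X ∉ K → ¬ IsBounded (connectedComponentIn Kᶜ X) →
      wind P₁ P₂ P₃ P₄ X = 0 := by
    intro X hXK hXb
    set S := connectedComponentIn Kᶜ X with hSdef
    have hXS : X ∈ S := mem_connectedComponentIn hXK
    have hSK : S ⊆ Kᶜ := connectedComponentIn_subset _ _
    have hSpre : IsPreconnected S := isPreconnected_connectedComponentIn
    obtain ⟨q, hqS, hqfar⟩ : ∃ q ∈ S, 4 * M + 1 ≤ ‖toC q‖ := by
      rw [Metric.isBounded_iff_subset_closedBall 0] at hXb
      push_neg at hXb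
      have hXb' : ¬ S ⊆ Metric.closedBall 0 (4 * M + 1) := hXb (4 * M + 1)
      rw [Set.not_subset] at hXb'
      obtain ⟨q, hq, hq'⟩ := hXb'
      refine ⟨q, hq, ?_⟩
      rw [Metric.mem_closedBall, not_le, dist_zero_right] at hq'
      rw [abs_toC]
      linarith
    have hdisj : ∀ q' ∈ S, q' ∉ segment ℝ P₁ P₂ ∧ q' ∉ segment ℝ P₂ P₃ ∧
        q' ∉ segment ℝ P₃ P₄ ∧ q' ∉ segment ℝ P₄ P₁ := by
      intro q' hq'
      have := hSK hq'
      rw [Set.mem_compl_iff, hKdef] at this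
      refine ⟨?_, ?_, ?_, ?_⟩ <;> intro hc <;> apply this
      · exact Or.inl (Or.inl (Or.inl hc))
      · exact Or.inl (Or.inl (Or.inr hc))
      · exact Or.inl (Or.inr hc)
      · exact Or.inr hc
    have := wind_const_on hSpre hdisj hXS hqS
    rw [this]
    exact wind_far_zero hM1 hM2 hM3 hM4 hqfar
  have hwA := key A hA hbA
  have hwB := key B hB hbB
  exact wind_ne h12 hAB hp1 hp2 hcap hd2 hd3 hd4 hcross (hwA.trans hwB.symm)

end LKAux
end

noncomputable section
namespace StraightLineDrawing

open LKAux Bornology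

variable {V : Type*} {G : SimpleGraph V} (D : StraightLineDrawing G)

lemma crosses_symm' {a b c d : V} (h : D.Crosses a b c d) : D.Crosses c d a b := by
  obtain ⟨p, h1, h2⟩ := h
  exact ⟨p, h2, h1⟩

lemma crosses_flip_right {a b c d : V} (h : D.Crosses a b c d) : D.Crosses a b d c := by
  obtain ⟨p, h1, h2⟩ := h
  exact ⟨p, h1, by rwa [openSegment_symm]⟩

lemma vertex_notin_seg {u v w : V} (huv : G.Adj u v) (hwu : w ≠ u) (hwv : w ≠ v) :
    D.ρ w ∉ segment ℝ (D.ρ u) (D.ρ v) := by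
  intro h
  rw [← insert_endpoints_openSegment, Set.mem_insert_iff, Set.mem_insert_iff] at h
  rcases h with h | h | h
  · exact hwu (D.inj h)
  · exact hwv (D.inj h)
  · exact D.vertex_not_interior huv w h

lemma seg_disjoint {a b c d : V} (hab : G.Adj a b) (hcd : G.Adj c d)
    (h1 : a ≠ c) (h2 : a ≠ d) (h3 : b ≠ c) (h4 : b ≠ d)
    (hnc : ¬ D.Crosses a b c d) :
    segment ℝ (D.ρ a) (D.ρ b) ∩ segment ℝ (D.ρ c) (D.ρ d) = ∅ := by
  rw [Set.eq_empty_iff_forall_notMem]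
  rintro q ⟨hq1, hq2⟩
  rw [← insert_endpoints_openSegment, Set.mem_insert_iff, Set.mem_insert_iff] at hq1
  rcases hq1 with rfl | rfl | hq1
  · exact D.vertex_notin_seg hcd h1 h2 hq2
  · exact D.vertex_notin_seg hcd h3 h4 hq2
  · rw [← insert_endpoints_openSegment, Set.mem_insert_iff, Set.mem_insert_iff] at hq2
    rcases hq2 with rfl | rfl | hq2
    · exact D.vertex_not_interior hab c hq1
    · exact D.vertex_not_interior hab d hq1
    · exact hnc ⟨q, hq1, hq2⟩

lemma rho_ne {u v : V} (h : u ≠ v) : D.ρ u ≠ D.ρ v := fun hc => h (D.inj hc)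

lemma slope_resolve {u v : V} (hne : u ≠ v) (h : HasSlopePM1 (D.ρ u) (D.ρ v)) :
    ∃ ε : ℝ, (ε = 1 ∨ ε = -1) ∧
      D.ρ v 1 - D.ρ u 1 = ε * (D.ρ v 0 - D.ρ u 0) ∧ D.ρ v 0 - D.ρ u 0 ≠ 0 := by
  have hd0 : D.ρ v 0 - D.ρ u 0 ≠ 0 := by
    intro hc
    apply D.rho_ne hne
    have h1 : D.ρ v 1 - D.ρ u 1 = 0 := by
      rcases h with h | h <;> rw [h, hc] <;> ring
    ext i
    fin_cases i
    · have : D.ρ v 0 = D.ρ u 0 := by linarith [sub_eq_zero.1 hc]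
      exact this.symm
    · have : D.ρ v 1 = D.ρ u 1 := by linarith [sub_eq_zero.1 h1]
      exact this.symm
  rcases h with h | h
  · exact ⟨1, Or.inl rfl, by linarith, hd0⟩
  · exact ⟨-1, Or.inr rfl, by linarith, hd0⟩

lemma inner_coords' (x y : Plane) :
    (inner ℝ x y : ℝ) = x 0 * y 0 + x 1 * y 1 := by
  rw [PiLp.inner_apply, Fin.sum_univ_two]
  simp [RCLike.inner_apply, conj_trivial]
  ring

lemma cross_slopes (hap : D.IsApRAC) {a b c d : V} (hab : G.Adj a b) (hcd : G.Adj c d)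
    (hx : D.Crosses a b c d) :
    ∃ ε : ℝ, (ε = 1 ∨ ε = -1) ∧
      D.ρ b 1 - D.ρ a 1 = ε * (D.ρ b 0 - D.ρ a 0) ∧ D.ρ b 0 - D.ρ a 0 ≠ 0 ∧
      D.ρ d 1 - D.ρ c 1 = -ε * (D.ρ d 0 - D.ρ c 0) ∧ D.ρ d 0 - D.ρ c 0 ≠ 0 := by
  obtain ⟨ε₁, hε₁, hs₁, hd₁⟩ := D.slope_resolve hab.ne (hap.2 hab ⟨c, d, hcd, hx⟩)
  obtain ⟨ε₂, hε₂, hs₂, hd₂⟩ := D.slope_resolve hcd.ne (hap.2 hcd ⟨a, b, hab, D.crosses_symm' hx⟩)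
  have hrac := hap.1 hab hcd hx
  have hin : (D.ρ b - D.ρ a) 0 * (D.ρ d - D.ρ c) 0
      + (D.ρ b - D.ρ a) 1 * (D.ρ d - D.ρ c) 1 = 0 := by
    rw [← inner_coords']
    exact hrac
  have hc0 : (D.ρ b - D.ρ a) 0 = D.ρ b 0 - D.ρ a 0 := rfl
  have hc1 : (D.ρ b - D.ρ a) 1 = D.ρ b 1 - D.ρ a 1 := rfl
  have hc2 : (D.ρ d - D.ρ c) 0 = D.ρ d 0 - D.ρ c 0 := rfl
  have hc3 : (D.ρ d - D.ρ c) 1 = D.ρ d 1 - D.ρ c 1 := rfl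
  rw [hc0, hc1, hc2, hc3, hs₁, hs₂] at hin
  have hprod : (1 + ε₁ * ε₂) * ((D.ρ b 0 - D.ρ a 0) * (D.ρ d 0 - D.ρ c 0)) = 0 := by
    linear_combination hin
  have hne : (D.ρ b 0 - D.ρ a 0) * (D.ρ d 0 - D.ρ c 0) ≠ 0 := mul_ne_zero hd₁ hd₂
  have hsum : 1 + ε₁ * ε₂ = 0 := by
    rcases mul_eq_zero.1 hprod with h | h
    · exact h
    · exact absurd h hne
  have hε₂' : ε₂ = -ε₁ := by
    rcases hε₁ with rfl | rfl <;> rcases hε₂ with rfl | rfl <;> linarith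
  exact ⟨ε₁, hε₁, hs₁, hd₁, by rw [← hε₂']; exact hs₂, hd₂⟩

lemma open_seg_linear' {x y p : Plane} (hp : p ∈ openSegment ℝ x y) (ε : ℝ)
    (hslope : y 1 - x 1 = ε * (y 0 - x 0)) : p 1 - x 1 = ε * (p 0 - x 0) := by
  rw [openSegment_eq_image'] at hp
  obtain ⟨t, _, rfl⟩ := hp
  show (x + t • (y - x)) 1 - x 1 = ε * ((x + t • (y - x)) 0 - x 0)
  have e0 : (x + t • (y - x)) 0 = x 0 + t * (y 0 - x 0) := rfl
  have e1 : (x + t • (y - x)) 1 = x 1 + t * (y 1 - x 1) := rfl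
  rw [e0, e1]
  linear_combination t * hslope

lemma no_double_cross (hap : D.IsApRAC) {a b v w₁ w₂ : V} (hab : G.Adj a b)
    (h1 : G.Adj v w₁) (h2 : G.Adj v w₂) (hw : w₁ ≠ w₂)
    (hx1 : D.Crosses a b v w₁) (hx2 : D.Crosses a b v w₂) : False := by
  obtain ⟨ε, hε, hsab, hd0, hs1, hd1⟩ := D.cross_slopes hap hab h1 hx1
  obtain ⟨ε', hε', hsab', hd0', hs2, hd2⟩ := D.cross_slopes hap hab h2 hx2
  have hεε : ε' = ε := by
    have := hsab.symm.trans hsab'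
    exact mul_right_cancel₀ hd0 this.symm
  rw [hεε] at hs2
  obtain ⟨p₁, hp₁e, hp₁f⟩ := hx1
  obtain ⟨p₂, hp₂e, hp₂f⟩ := hx2
  have l₁e := open_seg_linear' hp₁e ε hsab
  have l₂e := open_seg_linear' hp₂e ε hsab
  have l₁f := open_seg_linear' hp₁f (-ε) hs1
  have l₂f := open_seg_linear' hp₂f (-ε) hs2
  have hε2 : ε * ε = 1 := by rcases hε with rfl | rfl <;> norm_num
  have h0 : p₁ 0 = p₂ 0 := by
    have k1 : p₁ 1 - p₂ 1 = ε * (p₁ 0 - p₂ 0) := by linarith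
    have k2 : p₁ 1 - p₂ 1 = -ε * (p₁ 0 - p₂ 0) := by linarith
    have : 2 * ε * (p₁ 0 - p₂ 0) = 0 := by linarith
    have hεne : ε ≠ 0 := by rcases hε with rfl | rfl <;> norm_num
    have := mul_eq_zero.1 this
    rcases this with h | h
    · rcases mul_eq_zero.1 h with h' | h'
      · norm_num at h'
      · exact absurd h' hεne
    · linarith [sub_eq_zero.1 h]
  have h1' : p₁ 1 = p₂ 1 := by
    have := l₁e
    have := l₂e
    nlinarith [h0]
  have hpp : p₁ = p₂ := by
    ext i
    fin_cases i
    · exact h0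
    · exact h1'
  have hmem : p₁ ∈ segment ℝ (D.ρ v) (D.ρ w₁) ∩ segment ℝ (D.ρ v) (D.ρ w₂) :=
    ⟨openSegment_subset_segment _ _ _ hp₁f, hpp ▸ openSegment_subset_segment _ _ _ hp₂f⟩
  rw [D.shared_endpoint h1 h2 hw, Set.mem_singleton_iff] at hmem
  rw [hmem, left_mem_openSegment_iff] at hp₁f
  exact h1.ne (D.inj hp₁f)

lemma outer_not_bounded (hOuter : D.IsOuter) {K : Set Plane} (hKd : K ⊆ D.drawingSet)
    (hKc : IsClosed K) (w : V) (hw : D.ρ w ∉ K) :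
    ¬ IsBounded (connectedComponentIn Kᶜ (D.ρ w)) := by
  intro hb
  have hmem := hOuter w
  have hopen : IsOpen Kᶜ := hKc.isOpen_compl
  obtain ⟨ε, hε, hball⟩ := Metric.isOpen_iff.1 hopen _ hw
  rw [Metric.mem_closure_iff] at hmem
  obtain ⟨rpt, hrpt, hdist⟩ := hmem ε hε
  have hrball : rpt ∈ Metric.ball (D.ρ w) ε := by
    rwa [Metric.mem_ball, dist_comm]
  have hsub : Metric.ball (D.ρ w) ε ⊆ connectedComponentIn Kᶜ (D.ρ w) :=
    (convex_ball _ _).isPreconnected.subset_connectedComponentIn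
      (Metric.mem_ball_self hε) hball
  have h1 : rpt ∈ connectedComponentIn Kᶜ (D.ρ w) := hsub hrball
  have h2 : connectedComponentIn Kᶜ (D.ρ w) = connectedComponentIn Kᶜ rpt :=
    connectedComponentIn_eq h1
  have h3 : connectedComponentIn D.drawingSetᶜ rpt ⊆ connectedComponentIn Kᶜ rpt :=
    connectedComponentIn_mono rpt (Set.compl_subset_compl.2 hKd)
  exact hrpt.2 ((h2 ▸ hb).subset h3)

lemma seg_sub_drawingSet {u v : V} (huv : G.Adj u v) :
    segment ℝ (D.ρ u) (D.ρ v) ⊆ D.drawingSet := by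
  intro q hq
  rw [drawingSet, Set.mem_iUnion]
  exact ⟨u, Set.mem_iUnion.2 ⟨v, Set.mem_iUnion.2 ⟨huv, hq⟩⟩⟩

/-- The core geometric contradiction: an edge `ab` that crosses the side `SA` of a
quadrilateral cycle `S A T g` of the graph, avoids the other three sides, and is disjoint
from its vertices, contradicts outerness. -/
lemma quad_cross_contra (hOuter : D.IsOuter) (hap : D.IsApRAC)
    {a b S A T g : V}
    (hab : G.Adj a b) (hSA : G.Adj S A) (hAT : G.Adj A T) (hTg : G.Adj T g)
    (hgS : G.Adj g S)
    (haS : a ≠ S) (haA : a ≠ A) (haT : a ≠ T) (hag : a ≠ g)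
    (hbS : b ≠ S) (hbA : b ≠ A) (hbT : b ≠ T) (hbg : b ≠ g)
    (hx : D.Crosses a b S A)
    (hn2 : ¬ D.Crosses a b A T) (hn3 : ¬ D.Crosses a b T g) (hn4 : ¬ D.Crosses a b g S) :
    False := by
  obtain ⟨ε, hε, hsab, hd0, hsSA, hdSA⟩ := D.cross_slopes hap hab hSA hx
  obtain ⟨p, hp1, hp2⟩ := hx
  have h12 : D.ρ S ≠ D.ρ A := D.rho_ne hSA.ne
  have hABne : D.ρ a ≠ D.ρ b := D.rho_ne hab.ne
  have hne_sym2 : s(a, b) ≠ s(S, A) := by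
    rw [Ne, Sym2.eq_iff]
    push_neg
    exact ⟨fun h => absurd h haS, fun h => absurd h haA⟩
  have hcap : segment ℝ (D.ρ a) (D.ρ b) ∩ segment ℝ (D.ρ S) (D.ρ A) ⊆ {p} := by
    intro q hq
    have hsub := D.one_point hab hSA hne_sym2
    exact hsub hq ⟨openSegment_subset_segment _ _ _ hp1, openSegment_subset_segment _ _ _ hp2⟩
  have hd2 := D.seg_disjoint hab hAT haA haT hbA hbT hn2
  have hd3 := D.seg_disjoint hab hTg haT hag hbT hbg hn3
  have hd4 := D.seg_disjoint hab hgS hag haS hbg hbS hn4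
  have hcross : ((toC (D.ρ A) - toC (D.ρ S)) *
      (starRingEnd ℂ) (toC (D.ρ b) - toC (D.ρ a))).im ≠ 0 := by
    have him : ((toC (D.ρ A) - toC (D.ρ S)) *
        (starRingEnd ℂ) (toC (D.ρ b) - toC (D.ρ a))).im
        = (D.ρ A 1 - D.ρ S 1) * (D.ρ b 0 - D.ρ a 0)
          - (D.ρ A 0 - D.ρ S 0) * (D.ρ b 1 - D.ρ a 1) := by
      simp [Complex.mul_im, Complex.sub_re, Complex.sub_im, Complex.conj_re, Complex.conj_im,
        map_sub]
      ring
    rw [him, hsSA, hsab]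
    have hεne : ε ≠ 0 := by rcases hε with rfl | rfl <;> norm_num
    intro hcon
    have : (-2 * ε) * ((D.ρ A 0 - D.ρ S 0) * (D.ρ b 0 - D.ρ a 0)) = 0 := by
      linear_combination hcon
    rcases mul_eq_zero.1 this with h | h
    · rcases mul_eq_zero.1 h with h' | h'
      · norm_num at h'
      · exact hεne h'
    · rcases mul_eq_zero.1 h with h' | h'
      · exact hdSA h'
      · exact hd0 h'
  have hbdd := bounded_component h12 hABne hp1 hp2 hcap hd2 hd3 hd4 hcross
  set K : Set Plane := segment ℝ (D.ρ S) (D.ρ A) ∪ segment ℝ (D.ρ A) (D.ρ T)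
      ∪ segment ℝ (D.ρ T) (D.ρ g) ∪ segment ℝ (D.ρ g) (D.ρ S) with hKdef
  have hKsub : K ⊆ D.drawingSet := by
    rintro q (((h | h) | h) | h)
    · exact D.seg_sub_drawingSet hSA h
    · exact D.seg_sub_drawingSet hAT h
    · exact D.seg_sub_drawingSet hTg h
    · exact D.seg_sub_drawingSet hgS h
  have hKclosed : IsClosed K :=
    (((isClosed_segment' _ _).union (isClosed_segment' _ _)).union
      (isClosed_segment' _ _)).union (isClosed_segment' _ _)
  have hnotinK : ∀ w : V, w ≠ S → w ≠ A → w ≠ T → w ≠ g → D.ρ w ∉ K := by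
    intro w w1 w2 w3 w4 hc
    rcases hc with ((h | h) | h) | h
    · exact D.vertex_notin_seg hSA w1 w2 h
    · exact D.vertex_notin_seg hAT w2 w3 h
    · exact D.vertex_notin_seg hTg w3 w4 h
    · exact D.vertex_notin_seg hgS w4 w1 h
  rcases hbdd with hb | hb
  · exact D.outer_not_bounded hOuter hKsub hKclosed a (hnotinK a haS haA haT hag) hb
  · exact D.outer_not_bounded hOuter hKsub hKclosed b (hnotinK b hbS hbA hbT hbg) hb

end StraightLineDrawing
end

/-- The vertex `s_i` of the linked-`K_{2,3}` graph. -/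
def sV (k : ℕ) (i : ZMod k) : ZMod k × Fin 5 := (i, 0)
/-- The vertex `t_i` of the linked-`K_{2,3}` graph. -/
def tV (k : ℕ) (i : ZMod k) : ZMod k × Fin 5 := (i, 1)
/-- The vertex `x_i` of the linked-`K_{2,3}` graph. -/
def xV (k : ℕ) (i : ZMod k) : ZMod k × Fin 5 := (i, 2)
/-- The vertex `y_i` of the linked-`K_{2,3}` graph. -/
def yV (k : ℕ) (i : ZMod k) : ZMod k × Fin 5 := (i, 3)
/-- The vertex `z_i` of the linked-`K_{2,3}` graph. -/
def zV (k : ℕ) (i : ZMod k) : ZMod k × Fin 5 := (i, 4)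

/-- The six edges of the `i`-th copy `G_i` of `K_{2,3}` in the linked-`K_{2,3}` graph. -/
def k23Edges (k : ℕ) (i : ZMod k) : Set (Sym2 (ZMod k × Fin 5)) :=
  {s(sV k i, xV k i), s(xV k i, tV k i), s(sV k i, yV k i),
   s(yV k i, tV k i), s(sV k i, zV k i), s(zV k i, tV k i)}

/-- The `i`-th link edge `t_i s_{i+1}` of the linked-`K_{2,3}` graph. -/
def linkEdge (k : ℕ) (i : ZMod k) : Sym2 (ZMod k × Fin 5) :=
  s(tV k i, sV k (i + 1))

/-- The linked-`K_{2,3}` graph `L_k`: `k` copies of `K_{2,3}` (with parts `{s_i, t_i}` and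
`{x_i, y_i, z_i}`) linked into a ring by the edges `t_i s_{i+1}` (indices modulo `k`). -/
def linkedK23 (k : ℕ) : SimpleGraph (ZMod k × Fin 5) :=
  SimpleGraph.fromEdgeSet ((⋃ i : ZMod k, k23Edges k i) ∪ ⋃ i : ZMod k, {linkEdge k i})


noncomputable section
namespace LKComb

open StraightLineDrawing

variable {k : ℕ}

lemma mem_k23_left (i : ZMod k) (e : Sym2 (ZMod k × Fin 5)) (he : e ∈ k23Edges k i) :
    e ∈ (⋃ j : ZMod k, k23Edges k j) ∪ ⋃ j : ZMod k, {linkEdge k j} :=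
  Or.inl (Set.mem_iUnion.2 ⟨i, he⟩)

lemma adj_sx (i : ZMod k) : (linkedK23 k).Adj (sV k i) (xV k i) := by
  rw [linkedK23, SimpleGraph.fromEdgeSet_adj]
  refine ⟨mem_k23_left i _ (by simp [k23Edges]), by simp [sV, xV]⟩

lemma adj_xt (i : ZMod k) : (linkedK23 k).Adj (xV k i) (tV k i) := by
  rw [linkedK23, SimpleGraph.fromEdgeSet_adj]
  refine ⟨mem_k23_left i _ (by simp [k23Edges]), by simp [xV, tV]⟩

lemma adj_sy (i : ZMod k) : (linkedK23 k).Adj (sV k i) (yV k i) := by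
  rw [linkedK23, SimpleGraph.fromEdgeSet_adj]
  refine ⟨mem_k23_left i _ (by simp [k23Edges]), by simp [sV, yV]⟩

lemma adj_yt (i : ZMod k) : (linkedK23 k).Adj (yV k i) (tV k i) := by
  rw [linkedK23, SimpleGraph.fromEdgeSet_adj]
  refine ⟨mem_k23_left i _ (by simp [k23Edges]), by simp [yV, tV]⟩

lemma adj_sz (i : ZMod k) : (linkedK23 k).Adj (sV k i) (zV k i) := by
  rw [linkedK23, SimpleGraph.fromEdgeSet_adj]
  refine ⟨mem_k23_left i _ (by simp [k23Edges]), by simp [sV, zV]⟩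

lemma adj_zt (i : ZMod k) : (linkedK23 k).Adj (zV k i) (tV k i) := by
  rw [linkedK23, SimpleGraph.fromEdgeSet_adj]
  refine ⟨mem_k23_left i _ (by simp [k23Edges]), by simp [zV, tV]⟩

/-- A crossing edge `ab`, disjoint from all five vertices of a `K_{2,3}` pattern,
crossing the edge `SA`, yields a contradiction. -/
lemma wrapper (D : StraightLineDrawing (linkedK23 k)) (hOuter : D.IsOuter)
    (hap : D.IsApRAC) {a b S A T γ₁ γ₂ : ZMod k × Fin 5}
    (hab : (linkedK23 k).Adj a b)
    (hSA : (linkedK23 k).Adj S A) (hAT : (linkedK23 k).Adj A T)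
    (hTγ₁ : (linkedK23 k).Adj T γ₁) (hγ₁S : (linkedK23 k).Adj γ₁ S)
    (hTγ₂ : (linkedK23 k).Adj T γ₂) (hγ₂S : (linkedK23 k).Adj γ₂ S)
    (hST : S ≠ T) (hAγ₁ : A ≠ γ₁) (hAγ₂ : A ≠ γ₂) (hγγ : γ₁ ≠ γ₂)
    (haS : a ≠ S) (haA : a ≠ A) (haT : a ≠ T) (haγ₁ : a ≠ γ₁) (haγ₂ : a ≠ γ₂)
    (hbS : b ≠ S) (hbA : b ≠ A) (hbT : b ≠ T) (hbγ₁ : b ≠ γ₁) (hbγ₂ : b ≠ γ₂)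
    (hx : D.Crosses a b S A) : False := by
  have hn2 : ¬ D.Crosses a b A T := by
    intro hc
    exact D.no_double_cross hap hab hSA.symm hAT hST (D.crosses_flip_right hx) hc
  have hn4 : ∀ γ : ZMod k × Fin 5, A ≠ γ → (linkedK23 k).Adj S γ →
      ¬ D.Crosses a b γ S := by
    intro γ hAγ hSγ hc
    exact D.no_double_cross hap hab hSA hSγ hAγ hx (D.crosses_flip_right hc)
  by_cases hcr : D.Crosses a b T γ₁
  · have hn3 : ¬ D.Crosses a b T γ₂ := by
      intro hc
      exact D.no_double_cross hap hab hTγ₁ hTγ₂ hγγ hcr hc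
    exact D.quad_cross_contra hOuter hap hab hSA hAT hTγ₂ hγ₂S haS haA haT haγ₂
      hbS hbA hbT hbγ₂ hx hn2 hn3 (hn4 γ₂ hAγ₂ hγ₂S.symm)
  · exact D.quad_cross_contra hOuter hap hab hSA hAT hTγ₁ hγ₁S haS haA haT haγ₁
      hbS hbA hbT hbγ₁ hx hn2 hcr (hn4 γ₁ hAγ₁ hγ₁S.symm)

end LKComb
end

/-- In every outer straight-line apRAC drawing of `L_k` (`k ≥ 2`), any
edge of `L_k` outside the copy `G_i` that crosses some edge of `G_i` is one of the two link
edges incident to `G_i`, namely `t_i s_{i+1}` or `t_{i-1} s_i`. -/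
theorem linkedK23_only_links_cross (k : ℕ) (hk : 2 ≤ k)
    (D : StraightLineDrawing (linkedK23 k)) (hOuter : D.IsOuter) (hap : D.IsApRAC) :
    ∀ (i : ZMod k) (a b c d : ZMod k × Fin 5),
      (linkedK23 k).Adj a b → s(a, b) ∉ k23Edges k i →
      s(c, d) ∈ k23Edges k i → D.Crosses a b c d →
      s(a, b) = linkEdge k i ∨ s(a, b) = linkEdge k (i - 1) := by
  intro i a b c d hadj hnot hcd hx
  by_contra hcon
  push_neg at hcon
  obtain ⟨hL1, hL2⟩ := hcon
  have hadj' := hadj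
  rw [linkedK23, SimpleGraph.fromEdgeSet_adj] at hadj'
  obtain ⟨hmem, hne⟩ := hadj'
  -- Step 1: both endpoints of `ab` avoid all five vertices of `G_i`.
  have hav : ∀ f : Fin 5, a ≠ (i, f) ∧ b ≠ (i, f) := by
    rcases hmem with hm | hm
    · obtain ⟨j, hj⟩ := Set.mem_iUnion.1 hm
      have hji : j ≠ i := fun hc => hnot (hc ▸ hj)
      have hfst : a.1 = j ∧ b.1 = j := by
        simp only [k23Edges, Set.mem_insert_iff, Set.mem_singleton_iff, Sym2.eq_iff] at hj
        rcases hj with h | h | h | h | h | h <;> rcases h with ⟨h1, h2⟩ | ⟨h1, h2⟩ <;>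
          rw [h1, h2] <;> exact ⟨rfl, rfl⟩
      intro f
      constructor
      · intro hc
        apply hji
        rw [← hfst.1, hc]
      · intro hc
        apply hji
        rw [← hfst.2, hc]
    · obtain ⟨j, hj⟩ := Set.mem_iUnion.1 hm
      rw [Set.mem_singleton_iff] at hj
      have hji : j ≠ i := fun hc => hL1 (by rw [hj, hc])
      have hji' : j + 1 ≠ i := by
        intro hc
        apply hL2
        rw [hj]
        have : j = i - 1 := by rw [← hc]; ring
        rw [this]
      have hends : (a = tV k j ∧ b = sV k (j + 1)) ∨ (a = sV k (j + 1) ∧ b = tV k j) := by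
        rw [linkEdge, Sym2.eq_iff] at hj
        exact hj
      have hfa : a.1 = j ∨ a.1 = j + 1 := by
        rcases hends with ⟨h1, _⟩ | ⟨h1, _⟩
        · left; rw [h1]; rfl
        · right; rw [h1]; rfl
      have hfb : b.1 = j ∨ b.1 = j + 1 := by
        rcases hends with ⟨_, h2⟩ | ⟨_, h2⟩
        · right; rw [h2]; rfl
        · left; rw [h2]; rfl
      intro f
      constructor
      · intro hc
        rcases hfa with h | h
        · exact hji (by rw [← h, hc])
        · exact hji' (by rw [← h, hc])
      · intro hc
        rcases hfb with h | h
        · exact hji (by rw [← h, hc])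
        · exact hji' (by rw [← h, hc])
  have haS : a ≠ sV k i := by show a ≠ (i, 0); exact (hav 0).1
  have haT : a ≠ tV k i := by show a ≠ (i, 1); exact (hav 1).1
  have haX : a ≠ xV k i := by show a ≠ (i, 2); exact (hav 2).1
  have haY : a ≠ yV k i := by show a ≠ (i, 3); exact (hav 3).1
  have haZ : a ≠ zV k i := by show a ≠ (i, 4); exact (hav 4).1
  have hbS : b ≠ sV k i := by show b ≠ (i, 0); exact (hav 0).2
  have hbT : b ≠ tV k i := by show b ≠ (i, 1); exact (hav 1).2
  have hbX : b ≠ xV k i := by show b ≠ (i, 2); exact (hav 2).2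
  have hbY : b ≠ yV k i := by show b ≠ (i, 3); exact (hav 3).2
  have hbZ : b ≠ zV k i := by show b ≠ (i, 4); exact (hav 4).2
  have hst : sV k i ≠ tV k i := by simp [sV, tV, Prod.ext_iff]
  have hxy : xV k i ≠ yV k i := by simp [xV, yV, Prod.ext_iff]
  have hxz : xV k i ≠ zV k i := by simp [xV, zV, Prod.ext_iff]
  have hyz : yV k i ≠ zV k i := by simp [yV, zV, Prod.ext_iff]
  -- Step 2: case analysis on which edge of `G_i` is crossed.
  simp only [k23Edges, Set.mem_insert_iff, Set.mem_singleton_iff] at hcd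
  rcases hcd with h | h | h | h | h | h <;> rw [Sym2.eq_iff] at h <;>
      rcases h with ⟨h1, h2⟩ | ⟨h1, h2⟩ <;> subst h1 <;> subst h2
  · exact LKComb.wrapper D hOuter hap hadj (LKComb.adj_sx i) (LKComb.adj_xt i)
      (LKComb.adj_yt i).symm (LKComb.adj_sy i).symm (LKComb.adj_zt i).symm
      (LKComb.adj_sz i).symm hst hxy hxz hyz haS haX haT haY haZ hbS hbX hbT hbY hbZ hx
  · exact LKComb.wrapper D hOuter hap hadj (LKComb.adj_sx i) (LKComb.adj_xt i)
      (LKComb.adj_yt i).symm (LKComb.adj_sy i).symm (LKComb.adj_zt i).symm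
      (LKComb.adj_sz i).symm hst hxy hxz hyz haS haX haT haY haZ hbS hbX hbT hbY hbZ
      (D.crosses_flip_right hx)
  · exact LKComb.wrapper D hOuter hap hadj (LKComb.adj_xt i).symm (LKComb.adj_sx i).symm
      (LKComb.adj_sy i) (LKComb.adj_yt i) (LKComb.adj_sz i) (LKComb.adj_zt i)
      hst.symm hxy hxz hyz haT haX haS haY haZ hbT hbX hbS hbY hbZ
      (D.crosses_flip_right hx)
  · exact LKComb.wrapper D hOuter hap hadj (LKComb.adj_xt i).symm (LKComb.adj_sx i).symm
      (LKComb.adj_sy i) (LKComb.adj_yt i) (LKComb.adj_sz i) (LKComb.adj_zt i)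
      hst.symm hxy hxz hyz haT haX haS haY haZ hbT hbX hbS hbY hbZ hx
  · exact LKComb.wrapper D hOuter hap hadj (LKComb.adj_sy i) (LKComb.adj_yt i)
      (LKComb.adj_xt i).symm (LKComb.adj_sx i).symm (LKComb.adj_zt i).symm
      (LKComb.adj_sz i).symm hst hxy.symm hyz hxz haS haY haT haX haZ hbS hbY hbT hbX hbZ hx
  · exact LKComb.wrapper D hOuter hap hadj (LKComb.adj_sy i) (LKComb.adj_yt i)
      (LKComb.adj_xt i).symm (LKComb.adj_sx i).symm (LKComb.adj_zt i).symm
      (LKComb.adj_sz i).symm hst hxy.symm hyz hxz haS haY haT haX haZ hbS hbY hbT hbX hbZ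
      (D.crosses_flip_right hx)
  · exact LKComb.wrapper D hOuter hap hadj (LKComb.adj_yt i).symm (LKComb.adj_sy i).symm
      (LKComb.adj_sx i) (LKComb.adj_xt i) (LKComb.adj_sz i) (LKComb.adj_zt i)
      hst.symm hxy.symm hyz hxz haT haY haS haX haZ hbT hbY hbS hbX hbZ
      (D.crosses_flip_right hx)
  · exact LKComb.wrapper D hOuter hap hadj (LKComb.adj_yt i).symm (LKComb.adj_sy i).symm
      (LKComb.adj_sx i) (LKComb.adj_xt i) (LKComb.adj_sz i) (LKComb.adj_zt i)
      hst.symm hxy.symm hyz hxz haT haY haS haX haZ hbT hbY hbS hbX hbZ hx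
  · exact LKComb.wrapper D hOuter hap hadj (LKComb.adj_sz i) (LKComb.adj_zt i)
      (LKComb.adj_xt i).symm (LKComb.adj_sx i).symm (LKComb.adj_yt i).symm
      (LKComb.adj_sy i).symm hst hxz.symm hyz.symm hxy haS haZ haT haX haY hbS hbZ hbT hbX hbY hx
  · exact LKComb.wrapper D hOuter hap hadj (LKComb.adj_sz i) (LKComb.adj_zt i)
      (LKComb.adj_xt i).symm (LKComb.adj_sx i).symm (LKComb.adj_yt i).symm
      (LKComb.adj_sy i).symm hst hxz.symm hyz.symm hxy haS haZ haT haX haY hbS hbZ hbT hbX hbY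
      (D.crosses_flip_right hx)
  · exact LKComb.wrapper D hOuter hap hadj (LKComb.adj_zt i).symm (LKComb.adj_sz i).symm
      (LKComb.adj_sx i) (LKComb.adj_xt i) (LKComb.adj_sy i) (LKComb.adj_yt i)
      hst.symm hxz.symm hyz.symm hxy haT haZ haS haX haY hbT hbZ hbS hbX hbY
      (D.crosses_flip_right hx)
  · exact LKComb.wrapper D hOuter hap hadj (LKComb.adj_zt i).symm (LKComb.adj_sz i).symm
      (LKComb.adj_sx i) (LKComb.adj_xt i) (LKComb.adj_sy i) (LKComb.adj_yt i)
      hst.symm hxz.symm hyz.symm hxy haT haZ haS haX haY hbT hbZ hbS hbX hbY hx
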